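/- arXiv:2505.18348 — 5 statements merged into one kernel-verified Lean document; each statement's English description precedes it below -/
import Mathlib

section
/- Let X and Y be bounded linear operators on a Banach algebra (or elements of a Banach algebra). Then e^{X+Y} - e^X = ∫_0^1 e^{αX} Y e^{(1-α)(X+Y)} dα. -/
open MeasureTheory

/-! `α ↦ e^{αX} e^{(1-α)Z}` runs from `e^Z` to `e^X` and has derivative `e^{αX} (X - Z) e^{(1-α)Z}`,
so the formula is the fundamental theorem of calculus for this path, taken with `Z = X + Y`. -/

namespace NormedSpace

section

variable {𝕂 𝔸 : Type*} [RCLike 𝕂] [NormedRing 𝔸] [NormedAlgebra 𝕂 𝔸] [CompleteSpace 𝔸]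

theorem hasDerivAt_exp_one_sub_smul_const (Z : 𝔸) (t : 𝕂) :
    HasDerivAt (fun u : 𝕂 => exp ((1 - u) • Z)) (-(Z * exp ((1 - t) • Z))) t := by
  have h := (hasDerivAt_exp_smul_const' Z (1 - t)).scomp t ((hasDerivAt_id t).const_sub 1)
  rwa [neg_one_smul] at h

theorem hasDerivAt_exp_smul_mul_exp_one_sub_smul (X Z : 𝔸) (t : 𝕂) :
    HasDerivAt (fun u : 𝕂 => exp (u • X) * exp ((1 - u) • Z))
      (exp (t • X) * (X - Z) * exp ((1 - t) • Z)) t := by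
  refine ((hasDerivAt_exp_smul_const X t).mul
    (hasDerivAt_exp_one_sub_smul_const Z t)).congr_deriv ?_
  rw [mul_sub, sub_mul, mul_neg, mul_assoc, mul_assoc, ← sub_eq_add_neg]

end

variable {𝔸 : Type*} [NormedRing 𝔸] [NormedAlgebra ℝ 𝔸] [CompleteSpace 𝔸]

theorem integral_exp_smul_mul_sub_mul_exp_one_sub_smul (X Z : 𝔸) :
    ∫ α in (0:ℝ)..1, exp (α • X) * (X - Z) * exp ((1 - α) • Z) = exp X - exp Z := by
  have hexp : Continuous (exp : 𝔸 → 𝔸) :=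
    continuous_iff_continuousAt.2 fun x => (exp_analytic (𝕂 := ℝ) x).continuousAt
  have hcont : Continuous fun α : ℝ => exp (α • X) * (X - Z) * exp ((1 - α) • Z) := by
    fun_prop
  rw [intervalIntegral.integral_eq_sub_of_hasDerivAt
    (fun α _ => hasDerivAt_exp_smul_mul_exp_one_sub_smul X Z α) (hcont.intervalIntegrable 0 1)]
  simp

end NormedSpace

/-- **Duhamel formula.** For elements `X Y` of a Banach algebra,
`e^{X+Y} - e^X = ∫_0^1 e^{αX} Y e^{(1-α)(X+Y)} dα`. -/
theorem duhamel_exp_sub_exp {A : Type*} [NormedRing A] [NormedAlgebra ℝ A]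
    [CompleteSpace A] (X Y : A) :
    NormedSpace.exp (X + Y) - NormedSpace.exp X =
      ∫ α in (0:ℝ)..1,
        NormedSpace.exp (α • X) * Y * NormedSpace.exp ((1 - α) • (X + Y)) := by
  rw [← neg_sub, ← NormedSpace.integral_exp_smul_mul_sub_mul_exp_one_sub_smul,
    ← intervalIntegral.integral_neg]
  simp only [sub_add_cancel_left, mul_neg, neg_mul, neg_neg]
end

section
/- Let X and Y be elements of a Banach algebra and m a positive integer. Then e^{X+Y} - e^X = Σ_{k=1}^m ∫_{T_k} e^{α₀X} Y e^{α₁X} Y ⋯ e^{α_{k-1}X} Y e^{α_kX} dα + ∫_{T_{m+1}} e^{α₀X} Y ⋯ e^{α_mX} Y e^{α_{m+1}(X+Y)} dα, where T_k = {(α₀,…,α_k) : α_i ≥ 0, Σα_i = 1} is the standard simplex and dα denotes Lebesgue measure on it. -/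
open MeasureTheory

/-- The (open, coordinate) standard simplex `{α ∈ ℝ^k : αᵢ ≥ 0, Σ αᵢ ≤ 1}`, parametrizing the
simplex `T_k = {(α₀,…,α_k) : αᵢ ≥ 0, Σ αᵢ = 1}` by its first `k` coordinates (the last
coordinate being `1 - Σ`); `dα` is then Lebesgue measure on this set. -/
def coordSimplex (k : ℕ) : Set (Fin k → ℝ) :=
  {α | (∀ i, 0 ≤ α i) ∧ ∑ i, α i ≤ 1}

/- Duhamel's formula `e^{t(X+Y)} = e^{tX} + ∫₀ᵗ e^{sX} Y e^{(t-s)(X+Y)} ds`, applied to the last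
factor `e^{α_k(X+Y)}` of the remainder integral over `T_k`, together with Fubini for `T_{k+1}`
fibred over `T_k` by its last coordinate `s ∈ [0, 1 - Σ αᵢ]`, shows that the remainder over `T_k`
equals the `k`-th term plus the remainder over `T_{k+1}`. Starting from `T_0 = {pt}` and
telescoping gives the expansion. -/

open Set NormedSpace

lemma isClosed_coordSimplex (k : ℕ) : IsClosed (coordSimplex k) :=
  (isClosed_le continuous_const continuous_id).inter
    (isClosed_le (continuous_finsetSum _ fun i _ => continuous_apply i) continuous_const)

lemma isCompact_coordSimplex (k : ℕ) : IsCompact (coordSimplex k) := by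
  refine (isCompact_Icc (a := 0) (b := 1)).of_isClosed_subset (isClosed_coordSimplex k) ?_
  rintro α ⟨hα₀, hα₁⟩
  exact ⟨hα₀, fun i => (Finset.single_le_sum (fun j _ => hα₀ j) (Finset.mem_univ i)).trans hα₁⟩

lemma Continuous.integrableOn_coordSimplex {E : Type*} [NormedAddCommGroup E] {k : ℕ}
    {f : (Fin k → ℝ) → E} (hf : Continuous f) : IntegrableOn f (coordSimplex k) :=
  hf.continuousOn.integrableOn_compact (isCompact_coordSimplex k)

lemma snoc_mem_coordSimplex_iff {k : ℕ} {α : Fin k → ℝ} {s : ℝ} :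
    (Fin.snoc α s : Fin (k + 1) → ℝ) ∈ coordSimplex (k + 1) ↔
      α ∈ coordSimplex k ∧ s ∈ Icc 0 (1 - ∑ i, α i) := by
  simp only [coordSimplex, mem_ofPred_eq, Fin.forall_fin_succ', Fin.snoc_castSucc, Fin.snoc_last,
    Fin.sum_univ_castSucc, mem_Icc]
  constructor
  · rintro ⟨⟨hα, hs⟩, hsum⟩
    exact ⟨⟨hα, by linarith⟩, hs, by linarith⟩
  · rintro ⟨⟨hα, -⟩, hs, hsum⟩
    exact ⟨⟨hα, hs⟩, by linarith⟩

theorem setIntegral_coordSimplex_succ {E : Type*} [NormedAddCommGroup E] [NormedSpace ℝ E]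
    {k : ℕ} {f : (Fin (k + 1) → ℝ) → E} (hf : IntegrableOn f (coordSimplex (k + 1))) :
    ∫ β in coordSimplex (k + 1), f β =
      ∫ α in coordSimplex k, ∫ s in Icc 0 (1 - ∑ i, α i), f (Fin.snoc α s) := by
  have he := (volume_preserving_piFinSuccAbove (fun _ : Fin (k + 1) => ℝ) (Fin.last k)).symm
  have hsymm : ∀ p : ℝ × (Fin k → ℝ),
      (MeasurableEquiv.piFinSuccAbove (fun _ => ℝ) (Fin.last k)).symm p = Fin.snoc p.2 p.1 :=
    fun p => Fin.insertNth_last' p.1 p.2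
  have hfiber : ∀ α s, (coordSimplex (k + 1)).indicator f (Fin.snoc α s) =
      (coordSimplex k).indicator (fun α => (Icc 0 (1 - ∑ i, α i)).indicator
        (fun s => f (Fin.snoc α s)) s) α := by
    intro α s
    by_cases hα : α ∈ coordSimplex k <;> by_cases hs : s ∈ Icc 0 (1 - ∑ i, α i) <;>
      simp [indicator, snoc_mem_coordSimplex_iff, hα, hs]
  have hint : Integrable (fun p : ℝ × (Fin k → ℝ) =>
      (coordSimplex (k + 1)).indicator f (Fin.snoc p.2 p.1)) (volume.prod volume) := by
    rw [← Measure.volume_eq_prod]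
    simp_rw [← hsymm]
    exact he.integrable_comp_emb (MeasurableEquiv.measurableEmbedding _) |>.mpr
      (hf.integrable_indicator (isClosed_coordSimplex _).measurableSet)
  rw [← integral_indicator (isClosed_coordSimplex _).measurableSet, ← he.integral_comp',
    Measure.volume_eq_prod, integral_prod_symm _ (by simpa only [hsymm] using hint)]
  simp only [hsymm, hfiber]
  rw [← integral_indicator (isClosed_coordSimplex k).measurableSet]
  congr 1 with α
  by_cases hα : α ∈ coordSimplex k <;> simp [hα, integral_indicator measurableSet_Icc]

section DuhamelExpansion

variable {A : Type*} [NormedRing A] [NormedAlgebra ℝ A]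

noncomputable def expWord (X Y : A) (k : ℕ) (α : Fin k → ℝ) : A :=
  (List.ofFn fun i => exp (α i • X) * Y).prod

lemma expWord_snoc (X Y : A) {k : ℕ} (α : Fin k → ℝ) (s : ℝ) :
    expWord X Y (k + 1) (Fin.snoc α s) = expWord X Y k α * (exp (s • X) * Y) := by
  simp only [expWord, List.ofFn_succ', Fin.snoc_castSucc, Fin.snoc_last, List.prod_concat]

/-- `∫_{T_k} e^{α₀X} Y ⋯ e^{α_{k-1}X} Y e^{α_k W} dα`: the `k`-th term of the expansion for
`W = X`, the remainder for `W = X + Y`. -/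
noncomputable def duhamelTerm (X Y W : A) (k : ℕ) : A :=
  ∫ α in coordSimplex k, expWord X Y k α * exp ((1 - ∑ i, α i) • W)

variable [CompleteSpace A]

lemma duhamelTerm_zero (X Y W : A) : duhamelTerm X Y W 0 = exp W := by
  have hvol : (volume : Measure (Fin 0 → ℝ)).real univ = 1 := by
    simp [measureReal_def, volume_pi]
  simp [duhamelTerm, expWord, coordSimplex, hvol]

/-- `NormedSpace.exp_continuous` is stated for `ℚ`-algebras. -/
@[fun_prop]
lemma continuous_exp_of_real : Continuous (exp : A → A) :=
  letI : NormedAlgebra ℚ A := NormedAlgebra.restrictScalars ℚ ℝ A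
  exp_continuous

@[fun_prop]
lemma continuous_expWord (X Y : A) (k : ℕ) : Continuous (expWord X Y k) := by
  unfold expWord
  simp only [List.ofFn_eq_map]
  exact continuous_list_prod _ fun i _ => by fun_prop

theorem exp_smul_add_sub_exp_smul (X Y : A) (t : ℝ) :
    exp (t • (X + Y)) - exp (t • X) =
      ∫ s in (0 : ℝ)..t, exp (s • X) * Y * exp ((t - s) • (X + Y)) := by
  have hderiv : ∀ s : ℝ, HasDerivAt (fun s => exp (s • X) * exp ((t - s) • (X + Y)))
      (-(exp (s • X) * Y * exp ((t - s) • (X + Y)))) s := by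
    intro s
    have hright := (hasDerivAt_exp_smul_const' (X + Y) (t - s)).scomp s
      ((hasDerivAt_id s).const_sub t)
    refine ((hasDerivAt_exp_smul_const X s).mul hright).congr_deriv ?_
    simp only [Function.comp_apply, neg_one_smul]
    noncomm_ring
  have hcont : Continuous fun s : ℝ => exp (s • X) * Y * exp ((t - s) • (X + Y)) := by fun_prop
  rw [← neg_neg (∫ s in (0 : ℝ)..t, _), ← intervalIntegral.integral_neg,
    intervalIntegral.integral_eq_sub_of_hasDerivAt (fun s _ => hderiv s)
      (hcont.neg.intervalIntegrable 0 t)]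
  simp

theorem duhamelTerm_add_eq_add_succ (X Y : A) (k : ℕ) :
    duhamelTerm X Y (X + Y) k = duhamelTerm X Y X k + duhamelTerm X Y (X + Y) (k + 1) := by
  have hfiber : ∀ α ∈ coordSimplex k,
      ∫ s in Icc 0 (1 - ∑ i, α i), expWord X Y (k + 1) (Fin.snoc α s) *
        exp ((1 - ∑ i, (Fin.snoc α s : Fin (k + 1) → ℝ) i) • (X + Y)) =
      expWord X Y k α * exp ((1 - ∑ i, α i) • (X + Y)) -
        expWord X Y k α * exp ((1 - ∑ i, α i) • X) := by
    intro α hα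
    set t := 1 - ∑ i, α i
    have ht : 0 ≤ t := sub_nonneg.mpr hα.2
    have hint : IntervalIntegrable (fun s : ℝ => exp (s • X) * Y * exp ((t - s) • (X + Y)))
        volume 0 t := by apply Continuous.intervalIntegrable; fun_prop
    have hmul := (ContinuousLinearMap.mul ℝ A (expWord X Y k α)).intervalIntegral_comp_comm hint
    simp only [ContinuousLinearMap.mul_apply'] at hmul
    rw [← mul_sub, exp_smul_add_sub_exp_smul, ← hmul, intervalIntegral.integral_of_le ht,
      ← integral_Icc_eq_integral_Ioc]
    refine setIntegral_congr_fun measurableSet_Icc fun s _ => ?_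
    simp only [expWord_snoc, Fin.sum_univ_castSucc, Fin.snoc_castSucc, Fin.snoc_last, t,
      sub_add_eq_sub_sub, mul_assoc]
  suffices duhamelTerm X Y (X + Y) (k + 1) = duhamelTerm X Y (X + Y) k - duhamelTerm X Y X k by
    rw [this]; abel
  rw [duhamelTerm,
    setIntegral_coordSimplex_succ (Continuous.integrableOn_coordSimplex (by fun_prop)),
    setIntegral_congr_fun (isClosed_coordSimplex k).measurableSet hfiber,
    integral_sub (Continuous.integrableOn_coordSimplex (by fun_prop))
      (Continuous.integrableOn_coordSimplex (by fun_prop))]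
  rfl

end DuhamelExpansion

theorem duhamel_exp_expansion_general {A : Type*} [NormedRing A] [NormedAlgebra ℝ A]
    [CompleteSpace A] (X Y : A) (m : ℕ) :
    NormedSpace.exp (X + Y) - NormedSpace.exp X =
      (∑ k ∈ Finset.Icc 1 m,
        ∫ α in coordSimplex k,
          (List.ofFn fun i : Fin k => NormedSpace.exp (α i • X) * Y).prod *
            NormedSpace.exp ((1 - ∑ i, α i) • X) ∂volume) +
      ∫ α in coordSimplex (m + 1),
        (List.ofFn fun i : Fin (m + 1) => NormedSpace.exp (α i • X) * Y).prod *
          NormedSpace.exp ((1 - ∑ i, α i) • (X + Y)) ∂volume := by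
  show exp (X + Y) - exp X =
    (∑ k ∈ Finset.Icc 1 m, duhamelTerm X Y X k) + duhamelTerm X Y (X + Y) (m + 1)
  induction m with
  | zero => simp [← duhamelTerm_zero X Y, duhamelTerm_add_eq_add_succ X Y 0]
  | succ m ih =>
    rw [Finset.sum_Icc_succ_top (by omega), ih, duhamelTerm_add_eq_add_succ X Y (m + 1)]
    abel

/-- **Iterated Duhamel expansion.** For elements `X Y` of a Banach algebra and `m ≥ 1`,
`e^{X+Y} - e^X = Σ_{k=1}^m ∫_{T_k} e^{α₀X} Y e^{α₁X} Y ⋯ Y e^{α_kX} dα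
  + ∫_{T_{m+1}} e^{α₀X} Y ⋯ e^{α_mX} Y e^{α_{m+1}(X+Y)} dα`. -/
theorem duhamel_exp_expansion {A : Type*} [NormedRing A] [NormedAlgebra ℝ A]
    [CompleteSpace A] (X Y : A) (m : ℕ) (hm : 1 ≤ m) :
    NormedSpace.exp (X + Y) - NormedSpace.exp X =
      (∑ k ∈ Finset.Icc 1 m,
        ∫ α in coordSimplex k,
          (List.ofFn fun i : Fin k => NormedSpace.exp (α i • X) * Y).prod *
            NormedSpace.exp ((1 - ∑ i, α i) • X) ∂volume) +
      ∫ α in coordSimplex (m + 1),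
        (List.ofFn fun i : Fin (m + 1) => NormedSpace.exp (α i • X) * Y).prod *
          NormedSpace.exp ((1 - ∑ i, α i) • (X + Y)) ∂volume :=
  duhamel_exp_expansion_general X Y m
end

section
/- In a tracial noncommutative probability space (𝒜, φ), if X is an element with 𝐗 its Hermitization as above, then (tr₂ ⊗ φ)(e^{iu𝐗}) = φ(cos(u|X|)) for all real u. -/
/-!
The even powers of the Hermitization `[[0, X], [X*, 0]]` are `diag((XX*)^ℓ, (X*X)^ℓ)` and its odd
powers vanish on the diagonal, so the diagonal entries of `e^{iu𝐗}` are the cosine series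
`cos(u (XX*)^{1/2})` and `cos(u (X*X)^{1/2})`. Traciality gives `φ((XX*)^ℓ) = φ((X*X)^ℓ)`, and by
continuity of `φ` the two diagonal entries have the same image under `φ`.
-/

open scoped ComplexOrder

noncomputable section

variable {A : Type*} [CStarAlgebra A]

/-- `cosOfSqrt u a` is `cos(u √a)`, given by the power series
`Σ_ℓ (−1)^ℓ u^{2ℓ} a^ℓ / (2ℓ)!`; for `a = X X*` this is `cos(u|X|)` with
`|X| = (XX*)^{1/2}`. -/
def cosOfSqrt (u : ℝ) (a : A) : A :=
  ∑' ℓ : ℕ, ((((-1 : ℝ) ^ ℓ * u ^ (2 * ℓ) / (2 * ℓ).factorial : ℝ) : ℂ)) • a ^ ℓ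

/-- The exponential of a `2 × 2` matrix over `A`, as the sum of the exponential power
series. -/
def matrixExp (M : Matrix (Fin 2) (Fin 2) A) : Matrix (Fin 2) (Fin 2) A :=
  ∑' n : ℕ, ((n.factorial : ℂ)⁻¹) • M ^ n

section Antidiagonal

variable {R : Type*} [Semiring R]

theorem antidiag_pow_two_mul (x y : R) (ℓ : ℕ) :
    !![0, x; y, 0] ^ (2 * ℓ) = !![(x * y) ^ ℓ, 0; 0, (y * x) ^ ℓ] := by
  induction ℓ with
  | zero => simp [Matrix.one_fin_two]
  | succ ℓ ih =>
    rw [mul_add_one, pow_add, ih, sq, Matrix.mul_fin_two, Matrix.mul_fin_two]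
    simp [pow_succ]

theorem antidiag_pow_two_mul_add_one_diag (x y : R) (ℓ : ℕ) (i : Fin 2) :
    (!![0, x; y, 0] ^ (2 * ℓ + 1)) i i = 0 := by
  rw [pow_succ, antidiag_pow_two_mul, Matrix.mul_fin_two]
  fin_cases i <;> simp

end Antidiagonal

theorem map_pow_mul_comm {𝕜 R : Type*} [CommSemiring 𝕜] [Semiring R] [Module 𝕜 R]
    (φ : R →ₗ[𝕜] 𝕜) (hφ : ∀ a b, φ (a * b) = φ (b * a)) (x y : R) (n : ℕ) :
    φ ((x * y) ^ n) = φ ((y * x) ^ n) := by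
  cases n with
  | zero => simp only [pow_zero]
  | succ n => rw [pow_succ', mul_assoc, hφ, mul_assoc, mul_pow_mul, ← mul_assoc, ← pow_succ']

theorem map_eq_of_hasSum_smul_pow_mul_comm {𝕜 R : Type*} [CommSemiring 𝕜] [TopologicalSpace 𝕜]
    [T2Space 𝕜] [Semiring R] [TopologicalSpace R] [Module 𝕜 R]
    (φ : R →ₗ[𝕜] 𝕜) (hφc : Continuous φ) (hφ : ∀ a b, φ (a * b) = φ (b * a))
    {x y s t : R} {c : ℕ → 𝕜} (hs : HasSum (fun n => c n • (x * y) ^ n) s)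
    (ht : HasSum (fun n => c n • (y * x) ^ n) t) : φ s = φ t := by
  refine (hs.map φ hφc).unique ?_
  simpa only [Function.comp_def, map_smul, map_pow_mul_comm φ hφ x y] using ht.map φ hφc

-- The `L∞` operator norm on matrices induces the product topology, so the Banach-algebra
-- summability of the exponential series transfers to `Matrix`'s own topology.
theorem summable_matrixExp {n : Type*} [Fintype n] [DecidableEq n] (M : Matrix n n A) :
    Summable fun k : ℕ => ((k.factorial : ℂ)⁻¹) • M ^ k :=
  open scoped Matrix.Norms.Operator in
  @Summable.of_norm _ _ _ (inferInstanceAs (CompleteSpace (n → n → A))) _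
    (NormedSpace.norm_expSeries_summable' (𝕂 := ℂ) M)

theorem hasSum_matrixExp_apply_self
    (M : Matrix (Fin 2) (Fin 2) A) (c : ℂ) (i : Fin 2) (hodd : ∀ ℓ, (M ^ (2 * ℓ + 1)) i i = 0) :
    HasSum (fun ℓ : ℕ => (((2 * ℓ).factorial : ℂ)⁻¹ * c ^ (2 * ℓ)) • (M ^ (2 * ℓ)) i i)
      (matrixExp (c • M) i i) := by
  have hentry := Pi.hasSum.1 (Pi.hasSum.1 (summable_matrixExp (c • M)).hasSum i) i
  rw [← (mul_right_injective₀ two_ne_zero).hasSum_iff] at hentry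
  · simpa [matrixExp, smul_pow, smul_smul, Function.comp_def] using hentry
  · intro k hk
    rcases Nat.even_or_odd' k with ⟨ℓ, rfl | rfl⟩
    · exact absurd ⟨ℓ, rfl⟩ hk
    · simp [smul_pow, hodd]

theorem inv_factorial_two_mul_mul_ofReal_mul_I_pow (u : ℝ) (ℓ : ℕ) :
    ((2 * ℓ).factorial : ℂ)⁻¹ * ((u : ℂ) * Complex.I) ^ (2 * ℓ) =
      (((-1 : ℝ) ^ ℓ * u ^ (2 * ℓ) / (2 * ℓ).factorial : ℝ) : ℂ) := by
  rw [mul_pow, pow_mul Complex.I, Complex.I_sq]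
  push_cast
  ring

theorem hasSum_matrixExp_antidiag_zero_zero (x y : A) (u : ℝ) :
    HasSum (fun ℓ : ℕ => (((-1 : ℝ) ^ ℓ * u ^ (2 * ℓ) / (2 * ℓ).factorial : ℝ) : ℂ) • (x * y) ^ ℓ)
      (matrixExp (((u : ℂ) * Complex.I) • !![0, x; y, 0]) 0 0) := by
  have h := hasSum_matrixExp_apply_self !![0, x; y, 0] ((u : ℂ) * Complex.I) 0
    (antidiag_pow_two_mul_add_one_diag x y · 0)
  simp only [antidiag_pow_two_mul, inv_factorial_two_mul_mul_ofReal_mul_I_pow] at h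
  exact h

theorem hasSum_matrixExp_antidiag_one_one (x y : A) (u : ℝ) :
    HasSum (fun ℓ : ℕ => (((-1 : ℝ) ^ ℓ * u ^ (2 * ℓ) / (2 * ℓ).factorial : ℝ) : ℂ) • (y * x) ^ ℓ)
      (matrixExp (((u : ℂ) * Complex.I) • !![0, x; y, 0]) 1 1) := by
  have h := hasSum_matrixExp_apply_self !![0, x; y, 0] ((u : ℂ) * Complex.I) 1
    (antidiag_pow_two_mul_add_one_diag x y · 1)
  simp only [antidiag_pow_two_mul, inv_factorial_two_mul_mul_ofReal_mul_I_pow] at h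
  exact h

theorem tr2_phi_matrixExp_hermitization_general
    (φ : A →ₗ[ℂ] ℂ) (hφ_cont : Continuous φ)
    (hφ_trace : ∀ a b : A, φ (a * b) = φ (b * a))
    (X : A) (u : ℝ) :
    (1 / 2 : ℂ) *
        (φ ((matrixExp (((u : ℂ) * Complex.I) • !![0, X; star X, 0])) 0 0) +
         φ ((matrixExp (((u : ℂ) * Complex.I) • !![0, X; star X, 0])) 1 1)) =
      φ (cosOfSqrt u (X * star X)) := by
  have h00 := hasSum_matrixExp_antidiag_zero_zero X (star X) u
  have h11 := hasSum_matrixExp_antidiag_one_one X (star X) u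
  rw [map_eq_of_hasSum_smul_pow_mul_comm φ hφ_cont hφ_trace h11 h00, cosOfSqrt, h00.tsum_eq]
  ring

/-- In a tracial C*-probability space `(𝒜, φ)`, for `X ∈ 𝒜` with Hermitization
`𝐗 = [[0, X], [X*, 0]]`, one has `(tr₂ ⊗ φ)(e^{iu𝐗}) = φ(cos(u|X|))` for all real `u`,
where `tr₂` is the normalized trace on `2 × 2` matrices and `|X| = (XX*)^{1/2}`. -/
theorem tr2_phi_matrixExp_hermitization
    (φ : A →ₗ[ℂ] ℂ) (hφ_cont : Continuous φ)
    (hφ_one : φ 1 = 1)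
    (hφ_pos : ∀ a : A, 0 ≤ φ (star a * a))
    (hφ_trace : ∀ a b : A, φ (a * b) = φ (b * a))
    (X : A) (u : ℝ) :
    (1 / 2 : ℂ) *
        (φ ((matrixExp (((u : ℂ) * Complex.I) • !![0, X; star X, 0])) 0 0) +
         φ ((matrixExp (((u : ℂ) * Complex.I) • !![0, X; star X, 0])) 1 1)) =
      φ (cosOfSqrt u (X * star X)) :=
  tr2_phi_matrixExp_hermitization_general φ hφ_cont hφ_trace X u

end
end

section
/- Let μ and ν be Borel probability measures on ℝ such that ν has a Lebesgue density bounded by C > 0. Then the Kolmogorov distance satisfies 𝒦(μ, ν) ≤ √(2 C W₁(μ, ν)), where W₁ is the 1-Wasserstein distance. -/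
/-!
Test the dual bound against the 1-Lipschitz ramp `x ↦ min (max (a - x) 0) ε`. By the layer-cake
formula its integral against a finite measure is `∫ s in 0..ε, F(a - s)`, with `F` the CDF.
For `μ` this lies between `ε F_μ(a - ε)` and `ε F_μ(a)` by monotonicity; for `ν` the CDF is
`C`-Lipschitz, so it is within `C ε² / 2` of `ε` times either endpoint value. Taking `a = t + ε`
and `a = t` gives `ε |F_μ(t) - F_ν(t)| ≤ W + C ε² / 2` for every `ε > 0`, and the choice
`ε = |F_μ(t) - F_ν(t)| / C` yields the claim.
-/

open MeasureTheory Set intervalIntegral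
open scoped ENNReal

noncomputable def ramp (a ε x : ℝ) : ℝ := min (max (a - x) 0) ε

section Ramp

variable {a ε : ℝ}

lemma lipschitzWith_ramp (a ε : ℝ) : LipschitzWith 1 (ramp a ε) := by
  have h : LipschitzWith 1 fun x : ℝ => a - x := by
    simpa using (LipschitzWith.const a).sub LipschitzWith.id
  exact (h.max_const 0).min_const ε

lemma ramp_nonneg (hε : 0 ≤ ε) (x : ℝ) : 0 ≤ ramp a ε x :=
  le_min (le_max_right _ _) hε

lemma ramp_le (x : ℝ) : ramp a ε x ≤ ε := min_le_right _ _

lemma le_ramp_iff {s x : ℝ} (hs : 0 < s) (hsε : s ≤ ε) : s ≤ ramp a ε x ↔ x ≤ a - s := by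
  simp only [ramp, le_min_iff, le_max_iff, hsε, and_true, not_le.2 hs, or_false]
  constructor <;> intro h <;> linarith

lemma integrable_ramp (μ : Measure ℝ) [IsFiniteMeasure μ] (hε : 0 ≤ ε) :
    Integrable (ramp a ε) μ :=
  (integrable_const ε).mono' (lipschitzWith_ramp a ε).continuous.aestronglyMeasurable
    (ae_of_all _ fun x => by
      rw [Real.norm_eq_abs, abs_of_nonneg (ramp_nonneg hε x)]; exact ramp_le x)

lemma integral_ramp (μ : Measure ℝ) [IsFiniteMeasure μ] (hε : 0 ≤ ε) :
    ∫ x, ramp a ε x ∂μ = ∫ s in 0..ε, μ.real (Iic (a - s)) := by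
  rw [(integrable_ramp μ hε).integral_eq_integral_Ioc_meas_le
    (ae_of_all _ (ramp_nonneg hε)) (ae_of_all _ ramp_le), integral_of_le hε]
  refine setIntegral_congr_fun measurableSet_Ioc fun s hs => ?_
  simp only [le_ramp_iff hs.1 hs.2]
  rfl

end Ramp

section Averages

variable {F : ℝ → ℝ} {a ε C : ℝ}

lemma Monotone.mul_le_intervalIntegral_comp_sub (hF : Monotone F) (hε : 0 ≤ ε) :
    ε * F (a - ε) ≤ ∫ s in 0..ε, F (a - s) := by
  calc ε * F (a - ε) = ∫ _ in 0..ε, F (a - ε) := by simp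
    _ ≤ ∫ s in 0..ε, F (a - s) :=
      integral_mono_on hε intervalIntegrable_const
        (hF.comp_antitone antitone_const_tsub).intervalIntegrable
        fun s hs => hF (by linarith [hs.2])

lemma Monotone.intervalIntegral_comp_sub_le (hF : Monotone F) (hε : 0 ≤ ε) :
    ∫ s in 0..ε, F (a - s) ≤ ε * F a := by
  calc ∫ s in 0..ε, F (a - s) ≤ ∫ _ in 0..ε, F a :=
      integral_mono_on hε (hF.comp_antitone antitone_const_tsub).intervalIntegrable
        intervalIntegrable_const fun s hs => hF (by linarith [hs.1])
    _ = ε * F a := by simp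

lemma Monotone.intervalIntegral_comp_sub_le_of_sub_le (hF : Monotone F)
    (hFC : ∀ x y, x ≤ y → F y - F x ≤ C * (y - x)) (hε : 0 ≤ ε) :
    ∫ s in 0..ε, F (a - s) ≤ ε * F (a - ε) + C * ε ^ 2 / 2 := by
  have hlin : IntervalIntegrable (fun s => C * (ε - s)) volume 0 ε :=
    (intervalIntegrable_const.sub intervalIntegrable_id).const_mul C
  calc ∫ s in 0..ε, F (a - s) ≤ ∫ s in 0..ε, (F (a - ε) + C * (ε - s)) := by
        refine integral_mono_on hε (hF.comp_antitone antitone_const_tsub).intervalIntegrable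
          (intervalIntegrable_const.add hlin) fun s hs => ?_
        have := hFC (a - ε) (a - s) (by linarith [hs.2])
        linarith
    _ = ε * F (a - ε) + C * ε ^ 2 / 2 := by
      rw [integral_add intervalIntegrable_const hlin, intervalIntegral.integral_const_mul,
        integral_sub intervalIntegrable_const intervalIntegrable_id]
      simp only [intervalIntegral.integral_const, integral_id, smul_eq_mul]
      ring

lemma Monotone.mul_sub_le_intervalIntegral_comp_sub_of_sub_le (hF : Monotone F)
    (hFC : ∀ x y, x ≤ y → F y - F x ≤ C * (y - x)) (hε : 0 ≤ ε) :
    ε * F a - C * ε ^ 2 / 2 ≤ ∫ s in 0..ε, F (a - s) := by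
  calc ε * F a - C * ε ^ 2 / 2 = ∫ s in 0..ε, (F a - C * s) := by
        rw [integral_sub intervalIntegrable_const (intervalIntegrable_id.const_mul C),
          intervalIntegral.integral_const_mul]
        simp only [intervalIntegral.integral_const, integral_id, smul_eq_mul]
        ring
    _ ≤ ∫ s in 0..ε, F (a - s) := by
        refine integral_mono_on hε (intervalIntegrable_const.sub
          (intervalIntegrable_id.const_mul C))
          (hF.comp_antitone antitone_const_tsub).intervalIntegrable fun s hs => ?_
        have := hFC (a - s) a (by linarith [hs.1])
        linarith

end Averages

lemma measureReal_Iic_sub_le_of_le_smul_volume {ν : Measure ℝ} [IsFiniteMeasure ν] {C : ℝ}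
    (hC : 0 ≤ C) (hν : ν ≤ ENNReal.ofReal C • volume) {x y : ℝ} (hxy : x ≤ y) :
    ν.real (Iic y) - ν.real (Iic x) ≤ C * (y - x) := by
  rw [← measureReal_sdiff (Iic_subset_Iic.2 hxy) measurableSet_Iic, Iic_sdiff_Iic]
  refine ENNReal.toReal_le_of_le_ofReal (mul_nonneg hC (sub_nonneg.2 hxy)) ?_
  calc ν (Ioc x y) ≤ (ENNReal.ofReal C • volume) (Ioc x y) := hν _
    _ = ENNReal.ofReal (C * (y - x)) := by
      rw [Measure.smul_apply, Real.volume_Ioc, smul_eq_mul, ENNReal.ofReal_mul hC]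

lemma monotone_measureReal_Iic (μ : Measure ℝ) [IsFiniteMeasure μ] :
    Monotone fun x => μ.real (Iic x) :=
  fun _ _ h => measureReal_mono (Iic_subset_Iic.2 h)

lemma le_sqrt_of_forall_mul_le {x C W : ℝ} (hC : 0 < C)
    (h : ∀ ε > 0, ε * x ≤ W + C * ε ^ 2 / 2) : x ≤ √(2 * C * W) := by
  rcases le_or_gt x 0 with hx | hx
  · exact hx.trans (Real.sqrt_nonneg _)
  refine (Real.le_sqrt' hx).2 ?_
  have := h (x / C) (by positivity)
  field_simp at this
  nlinarith

theorem kolmogorov_le_sqrt_wasserstein_general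
    (μ ν : Measure ℝ) [IsProbabilityMeasure μ] [IsProbabilityMeasure ν]
    (C : ℝ) (hC : 0 < C) (d : ℝ → ℝ≥0∞)
    (hν : ν = volume.withDensity d) (hd : ∀ x, d x ≤ ENNReal.ofReal C)
    (W : ℝ)
    (hdual : ∀ f : ℝ → ℝ, LipschitzWith 1 f →
      (∫ x, f x ∂μ) - (∫ x, f x ∂ν) ≤ W) :
    ∀ t : ℝ, |(μ (Set.Iic t)).toReal - (ν (Set.Iic t)).toReal| ≤
      Real.sqrt (2 * C * W) := by
  have hν_le : ν ≤ ENNReal.ofReal C • volume := by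
    rw [hν, ← withDensity_const]
    exact withDensity_mono (ae_of_all _ hd)
  have hν_cdf := fun x y (hxy : x ≤ y) =>
    measureReal_Iic_sub_le_of_le_smul_volume hC.le hν_le hxy
  have hμν : ∀ a {ε}, 0 ≤ ε →
      (∫ s in 0..ε, μ.real (Iic (a - s))) - ∫ s in 0..ε, ν.real (Iic (a - s)) ≤ W := by
    intro a ε hε
    simpa only [integral_ramp _ hε] using hdual _ (lipschitzWith_ramp a ε)
  have hνμ : ∀ a {ε}, 0 ≤ ε →
      (∫ s in 0..ε, ν.real (Iic (a - s))) - ∫ s in 0..ε, μ.real (Iic (a - s)) ≤ W := by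
    intro a ε hε
    have := hdual _ (lipschitzWith_ramp a ε).neg
    simp only [Pi.neg_apply, MeasureTheory.integral_neg, integral_ramp _ hε] at this
    linarith
  intro t
  change |μ.real (Iic t) - ν.real (Iic t)| ≤ _
  refine abs_le'.2 ⟨le_sqrt_of_forall_mul_le hC fun ε hε => ?_,
    le_sqrt_of_forall_mul_le hC fun ε hε => ?_⟩
  · have hμ_avg := (monotone_measureReal_Iic μ).mul_le_intervalIntegral_comp_sub
      (a := t + ε) hε.le
    have hν_avg := (monotone_measureReal_Iic ν).intervalIntegral_comp_sub_le_of_sub_le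
      (a := t + ε) hν_cdf hε.le
    simp only [add_sub_cancel_right] at hμ_avg hν_avg
    linarith [hμν (t + ε) hε.le]
  · have hμ_avg := (monotone_measureReal_Iic μ).intervalIntegral_comp_sub_le (a := t) hε.le
    have hν_avg := (monotone_measureReal_Iic ν).mul_sub_le_intervalIntegral_comp_sub_of_sub_le
      (a := t) hν_cdf hε.le
    linarith [hνμ t hε.le]

/-- If `μ, ν` are Borel probability measures on `ℝ`, `ν` has a Lebesgue density bounded by
`C > 0`, and `W` bounds the Kantorovich–Rubinstein dual expressions
`∫ f dμ − ∫ f dν` over all `1`-Lipschitz `f` (in particular one may take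
`W = W₁(μ,ν)`), then the Kolmogorov distance satisfies
`sup_t |F_μ(t) − F_ν(t)| ≤ √(2 C W)`. -/
theorem kolmogorov_le_sqrt_wasserstein
    (μ ν : Measure ℝ) [IsProbabilityMeasure μ] [IsProbabilityMeasure ν]
    (C : ℝ) (hC : 0 < C) (d : ℝ → ℝ≥0∞)
    (hν : ν = volume.withDensity d) (hd : ∀ x, d x ≤ ENNReal.ofReal C)
    (W : ℝ) (hW : 0 ≤ W)
    (hdual : ∀ f : ℝ → ℝ, LipschitzWith 1 f →
      (∫ x, f x ∂μ) - (∫ x, f x ∂ν) ≤ W) :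
    ∀ t : ℝ, |(μ (Set.Iic t)).toReal - (ν (Set.Iic t)).toReal| ≤
      Real.sqrt (2 * C * W) :=
  kolmogorov_le_sqrt_wasserstein_general μ ν C hC d hν hd W hdual
end

section
/- Let ℓ ≥ 0, β ∈ (0,1], r = ℓ + β, and let f be ℓ-times differentiable on ℝ with f^{(i)}(0) = 0 for i ≤ ℓ and ‖f^{(ℓ)}‖_β ≤ 1 (β-Hölder seminorm). Let θ be a smooth cutoff (θ ≡ 1 on [−1/2,1/2], θ ≡ 0 off [−1,1]) and f_ζ = f·θ(ζ·) for 0 < ζ ≤ 1. Then there is a constant C (depending only on r and θ) such that for all R ≥ 1/ζ and all x, z ∈ [−R, R]: |f_ζ^{(ℓ)}(z) − f_ζ^{(ℓ)}(x)| ≤ C·(|x−z|^β ∧ 1)·(|x−z| ∨ 1)·(1 + R^r ζ^ℓ). -/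
set_option maxHeartbeats 1000000

open Finset

lemma sum_pascal (n : ℕ) (a b : ℕ → ℝ) :
    ∑ k ∈ Finset.range (n+1), (n.choose k : ℝ) * (a (k+1) * b (n-k) + a k * b (n-k+1)) =
    ∑ k ∈ Finset.range (n+2), ((n+1).choose k : ℝ) * (a k * b (n+1-k)) := by
  have h1 : ∑ k ∈ Finset.range (n+1), (n.choose k : ℝ) * (a (k+1) * b (n-k) + a k * b (n-k+1))
      = ∑ k ∈ Finset.range (n+1), ((n.choose k : ℝ) * (a (k+1) * b (n-k)))
        + ∑ k ∈ Finset.range (n+1), ((n.choose k : ℝ) * (a k * b (n-k+1))) := by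
    rw [← Finset.sum_add_distrib]
    exact Finset.sum_congr rfl fun k _ => by ring
  rw [h1]
  rw [Finset.sum_range_succ' (fun k => ((n+1).choose k : ℝ) * (a k * b (n+1-k))) (n+1)]
  rw [Finset.sum_range_succ' (fun k => ((n).choose k : ℝ) * (a k * b (n-k+1))) n]
  simp only [Nat.succ_sub_succ, Nat.choose_zero_right, Nat.cast_one, Nat.sub_zero, Nat.add_sub_cancel]
  have h2 : ∑ i ∈ Finset.range n, ((n).choose (i+1) : ℝ) * (a (i+1) * b (n-(i+1)+1))
      = ∑ i ∈ Finset.range n, ((n).choose (i+1) : ℝ) * (a (i+1) * b (n-i)) := by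
    refine Finset.sum_congr rfl fun i hi => ?_
    rw [Finset.mem_range] at hi
    have : n-(i+1)+1 = n-i := by omega
    rw [this]
  rw [h2]
  have h3 : ∑ i ∈ Finset.range (n+1), (((n+1)).choose (i+1) : ℝ) * (a (i+1) * b (n-i))
      = ∑ i ∈ Finset.range (n+1), ((n.choose i : ℝ) * (a (i+1) * b (n-i))
          + (n.choose (i+1) : ℝ) * (a (i+1) * b (n-i))) := by
    refine Finset.sum_congr rfl fun i _ => ?_
    rw [Nat.choose_succ_succ]
    push_cast
    ring
  rw [h3, Finset.sum_add_distrib]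
  have h4 : ∑ i ∈ Finset.range (n+1), ((n).choose (i+1) : ℝ) * (a (i+1) * b (n-i))
      = ∑ i ∈ Finset.range n, ((n).choose (i+1) : ℝ) * (a (i+1) * b (n-i)) := by
    rw [Finset.sum_range_succ, Nat.choose_succ_self]
    simp
  rw [h4]
  ring

lemma leibniz_iteratedDeriv (n : ℕ) (u v : ℝ → ℝ) (hu : ContDiff ℝ n u) (hv : ContDiff ℝ n v) :
    iteratedDeriv n (fun y => u y * v y) =
      fun x => ∑ k ∈ Finset.range (n+1),
        (n.choose k : ℝ) * (iteratedDeriv k u x * iteratedDeriv (n-k) v x) := by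
  induction n generalizing u v with
  | zero => funext x; simp
  | succ n ih =>
    funext x
    have hdu : ∀ k : ℕ, k ≤ n + 1 → ∀ y, DifferentiableAt ℝ (iteratedDeriv k u) y → True := fun _ _ _ _ => trivial
    have du : ∀ k : ℕ, k ≤ n → Differentiable ℝ (iteratedDeriv k u) := by
      intro k hk
      exact hu.differentiable_iteratedDeriv k (by exact_mod_cast Nat.lt_succ_of_le hk)
    have dv : ∀ k : ℕ, k ≤ n → Differentiable ℝ (iteratedDeriv k v) := by
      intro k hk
      exact hv.differentiable_iteratedDeriv k (by exact_mod_cast Nat.lt_succ_of_le hk)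
    rw [iteratedDeriv_succ, ih u v hu.of_succ hv.of_succ]
    have hterm : ∀ k ∈ Finset.range (n+1), DifferentiableAt ℝ
        (fun y => (n.choose k : ℝ) * (iteratedDeriv k u y * iteratedDeriv (n-k) v y)) x := by
      intro k hk
      rw [Finset.mem_range] at hk
      exact (((du k (by omega)).differentiableAt.mul (dv (n-k) (by omega)).differentiableAt).const_mul _)
    rw [deriv_fun_sum hterm]
    have hder : ∀ k ∈ Finset.range (n+1),
        deriv (fun y => (n.choose k : ℝ) * (iteratedDeriv k u y * iteratedDeriv (n-k) v y)) x
        = (n.choose k : ℝ) * (iteratedDeriv (k+1) u x * iteratedDeriv (n-k) v x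
            + iteratedDeriv k u x * iteratedDeriv (n-k+1) v x) := by
      intro k hk
      rw [Finset.mem_range] at hk
      rw [deriv_const_mul _ (((du k (by omega)).differentiableAt).fun_mul ((dv (n-k) (by omega)).differentiableAt)),
        deriv_fun_mul ((du k (by omega)).differentiableAt) ((dv (n-k) (by omega)).differentiableAt),
        iteratedDeriv_succ, iteratedDeriv_succ]
    rw [Finset.sum_congr rfl hder]
    exact sum_pascal n (fun k => iteratedDeriv k u x) (fun k => iteratedDeriv k v x)

lemma pow_bound {ζ R β : ℝ} (hζ : 0 < ζ) (hβ : 0 ≤ β) (hR : 1 ≤ R) (hζR : 1 ≤ ζ * R)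
    {m ℓ : ℕ} (hm : m ≤ ℓ) : ζ ^ m * R ^ ((m : ℝ) + β) ≤ ζ ^ ℓ * R ^ ((ℓ : ℝ) + β) := by
  have hR0 : (0:ℝ) < R := lt_of_lt_of_le one_pos hR
  rw [Real.rpow_add hR0, Real.rpow_add hR0, Real.rpow_natCast, Real.rpow_natCast]
  have h1 : ζ ^ m * R ^ m ≤ ζ ^ ℓ * R ^ ℓ := by
    rw [← mul_pow, ← mul_pow]
    exact pow_le_pow_right₀ hζR hm
  have h2 : (0:ℝ) ≤ R ^ β := Real.rpow_nonneg hR0.le β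
  calc ζ ^ m * (R ^ m * R ^ β) = (ζ ^ m * R ^ m) * R ^ β := by ring
    _ ≤ (ζ ^ ℓ * R ^ ℓ) * R ^ β := mul_le_mul_of_nonneg_right h1 h2
    _ = ζ ^ ℓ * (R ^ ℓ * R ^ β) := by ring

lemma aux_taylor (ℓ : ℕ) (β : ℝ) (hβ0 : 0 < β) (f : ℝ → ℝ)
    (hdiff : ∀ i < ℓ, Differentiable ℝ (iteratedDeriv i f))
    (hzero : ∀ i ≤ ℓ, iteratedDeriv i f 0 = 0)
    (hholder : ∀ a b : ℝ, |iteratedDeriv ℓ f a - iteratedDeriv ℓ f b| ≤ |a - b| ^ β) :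
    ∀ k ≤ ℓ, ∀ y : ℝ, |iteratedDeriv (ℓ - k) f y| ≤ |y| ^ ((k : ℝ) + β) := by
  intro k
  induction k with
  | zero =>
    intro _ y
    have h := hholder y 0
    rw [hzero ℓ le_rfl, sub_zero, sub_zero] at h
    simpa using h
  | succ k ih =>
    intro hk y
    set j := ℓ - (k+1) with hj
    have hjℓ : j < ℓ := by omega
    have hj1 : j + 1 = ℓ - k := by omega
    have hy0 : (0:ℝ) ∈ Set.Icc (-|y|) (|y|) := by
      constructor <;> simp [abs_nonneg]
    have hyy : y ∈ Set.Icc (-|y|) (|y|) := ⟨neg_abs_le y, le_abs_self y⟩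
    have hder : ∀ t ∈ Set.Icc (-|y|) (|y|), ‖deriv (iteratedDeriv j f) t‖ ≤ |y| ^ ((k:ℝ) + β) := by
      intro t ht
      rw [Real.norm_eq_abs, ← iteratedDeriv_succ, hj1]
      refine le_trans (ih (by omega) t) ?_
      apply Real.rpow_le_rpow (abs_nonneg t) _ (by positivity)
      rw [abs_le]
      exact ⟨ht.1, ht.2⟩
    have hmvt := Convex.norm_image_sub_le_of_norm_deriv_le
      (fun t _ => (hdiff j hjℓ t)) hder (convex_Icc _ _) hy0 hyy
    rw [hzero j (by omega), sub_zero, sub_zero, Real.norm_eq_abs, Real.norm_eq_abs] at hmvt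
    rcases eq_or_ne y 0 with rfl | hy
    · simp only [abs_zero]
      rw [Real.zero_rpow (by positivity)]
      simpa using hmvt
    · have hcast : ((k+1 : ℕ) : ℝ) + β = ((k:ℝ) + β) + 1 := by push_cast; ring
      rw [hcast, Real.rpow_add_one (abs_ne_zero.mpr hy)]
      exact hmvt

lemma aux_lip (ℓ : ℕ) (β : ℝ) (hβ0 : 0 < β) (f : ℝ → ℝ)
    (hdiff : ∀ i < ℓ, Differentiable ℝ (iteratedDeriv i f))
    (hzero : ∀ i ≤ ℓ, iteratedDeriv i f 0 = 0)
    (hholder : ∀ a b : ℝ, |iteratedDeriv ℓ f a - iteratedDeriv ℓ f b| ≤ |a - b| ^ β)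
    (j : ℕ) (hj : j < ℓ) (R : ℝ) (hR : 0 ≤ R) :
    ∀ x z : ℝ, |x| ≤ R → |z| ≤ R →
      |iteratedDeriv j f z - iteratedDeriv j f x| ≤ R ^ (((ℓ - j - 1 : ℕ) : ℝ) + β) * |z - x| := by
  intro x z hx hz
  have hxm : x ∈ Set.Icc (-R) R := ⟨neg_le_of_abs_le hx, le_of_abs_le hx⟩
  have hzm : z ∈ Set.Icc (-R) R := ⟨neg_le_of_abs_le hz, le_of_abs_le hz⟩
  have hj1 : j + 1 = ℓ - (ℓ - j - 1) := by omega
  have hder : ∀ t ∈ Set.Icc (-R) R, ‖deriv (iteratedDeriv j f) t‖ ≤ R ^ (((ℓ - j - 1 : ℕ) : ℝ) + β) := by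
    intro t ht
    rw [Real.norm_eq_abs, ← iteratedDeriv_succ, hj1]
    refine le_trans (aux_taylor ℓ β hβ0 f hdiff hzero hholder (ℓ - j - 1) (by omega) t) ?_
    apply Real.rpow_le_rpow (abs_nonneg t) _ (by positivity)
    rw [abs_le]; exact ⟨ht.1, ht.2⟩
  have := Convex.norm_image_sub_le_of_norm_deriv_le
    (fun t _ => (hdiff j hj t)) hder (convex_Icc _ _) hxm hzm
  simpa [Real.norm_eq_abs] using this

/-- Let `r = ℓ + β`, `β ∈ (0,1]`, and `θ` a smooth cutoff (`θ ≡ 1` on `[−1/2,1/2]`,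
`θ ≡ 0` off `[−1,1]`, `0 ≤ θ ≤ 1`).  There is a constant `C` (depending only on `r` and
`θ`) such that for every `f` that is `ℓ`-times differentiable with `f⁽ⁱ⁾(0) = 0` for
`i ≤ ℓ` and `‖f⁽ˡ⁾‖_β ≤ 1`, every `0 < ζ ≤ 1`, every `R ≥ 1/ζ`, and all
`x, z ∈ [−R, R]`, the truncation `f_ζ = f·θ(ζ·)` satisfies
`|f_ζ⁽ˡ⁾(z) − f_ζ⁽ˡ⁾(x)| ≤ C (|x−z|^β ∧ 1)(|x−z| ∨ 1)(1 + R^r ζ^ℓ)`. -/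
theorem truncated_zolotarev_deriv_estimate
    (ℓ : ℕ) (β : ℝ) (hβ0 : 0 < β) (hβ1 : β ≤ 1)
    (θ : ℝ → ℝ)
    (hθ_smooth : ContDiff ℝ (⊤ : ℕ∞) θ)
    (hθ_one : ∀ x ∈ Set.Icc (-(1/2) : ℝ) (1/2), θ x = 1)
    (hθ_zero : ∀ x : ℝ, 1 < |x| → θ x = 0)
    (hθ_nonneg : ∀ x, 0 ≤ θ x) (hθ_le_one : ∀ x, θ x ≤ 1) :
    ∃ C : ℝ, 0 < C ∧
      ∀ (f : ℝ → ℝ),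
        (∀ i < ℓ, Differentiable ℝ (iteratedDeriv i f)) →
        (∀ i ≤ ℓ, iteratedDeriv i f 0 = 0) →
        (∀ a b : ℝ, |iteratedDeriv ℓ f a - iteratedDeriv ℓ f b| ≤ |a - b| ^ β) →
        ∀ (ζ : ℝ), 0 < ζ → ζ ≤ 1 →
        ∀ (R : ℝ), ζ⁻¹ ≤ R →
        ∀ x z : ℝ, |x| ≤ R → |z| ≤ R →
          |iteratedDeriv ℓ (fun y => f y * θ (ζ * y)) z -
              iteratedDeriv ℓ (fun y => f y * θ (ζ * y)) x| ≤
            C * (min (|x - z| ^ β) 1) * (max (|x - z|) 1) *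
              (1 + R ^ ((ℓ : ℝ) + β) * ζ ^ ℓ) := by
  -- all derivatives of θ vanish where |y| > 1
  have hΘzero : ∀ (k : ℕ) (y : ℝ), 1 < |y| → iteratedDeriv k θ y = 0 := by
    intro k y hy
    have hopen : IsOpen {w : ℝ | 1 < |w|} := isOpen_lt continuous_const continuous_abs
    have hev : θ =ᶠ[nhds y] (fun _ => (0:ℝ)) := by
      filter_upwards [hopen.mem_nhds hy] with w hw using hθ_zero w hw
    rw [hev.iteratedDeriv_eq k, iteratedDeriv, iteratedFDeriv_zero_fun]
    simp
  -- bounds on derivatives of θ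
  have hΘbd : ∀ k : ℕ, ∃ Mk : ℝ, ∀ y, |iteratedDeriv k θ y| ≤ Mk := by
    intro k
    obtain ⟨B, hB⟩ := (isCompact_Icc (a := (-1:ℝ)) (b := 1)).exists_bound_of_continuousOn
      ((hθ_smooth.continuous_iteratedDeriv k (by exact_mod_cast le_top)).continuousOn)
    refine ⟨max B 0, fun y => ?_⟩
    by_cases hy : |y| ≤ 1
    · have := hB y ⟨neg_le_of_abs_le hy, le_of_abs_le hy⟩
      rw [Real.norm_eq_abs] at this
      exact le_trans this (le_max_left _ _)
    · rw [hΘzero k y (not_le.mp hy)]; simp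
  choose Mk hMk using hΘbd
  set M : ℝ := 1 + ∑ k ∈ Finset.range (ℓ+2), max (Mk k) 0 with hMdef
  have hM1 : 1 ≤ M := by
    have h := Finset.sum_nonneg (fun k (_ : k ∈ Finset.range (ℓ+2)) => le_max_right (Mk k) 0)
    linarith
  have hM0 : 0 < M := lt_of_lt_of_le one_pos hM1
  have hMbd : ∀ k ≤ ℓ+1, ∀ y, |iteratedDeriv k θ y| ≤ M := by
    intro k hk y
    have h1 : max (Mk k) 0 ≤ ∑ i ∈ Finset.range (ℓ+2), max (Mk i) 0 :=
      Finset.single_le_sum (fun i _ => le_max_right (Mk i) 0) (Finset.mem_range.mpr (by omega))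
    have h2 := hMk k y
    have h3 : Mk k ≤ max (Mk k) 0 := le_max_left _ _
    rw [hMdef]
    linarith
  -- derivatives of θ are M-Lipschitz
  have hΘlip : ∀ k ≤ ℓ, ∀ a b : ℝ, |iteratedDeriv k θ a - iteratedDeriv k θ b| ≤ M * |a - b| := by
    intro k hk a b
    have hd : ∀ t ∈ (Set.univ : Set ℝ), DifferentiableAt ℝ (iteratedDeriv k θ) t := by
      intro t _
      exact (hθ_smooth.differentiable_iteratedDeriv k (by exact_mod_cast ENat.coe_lt_top k)) t
    have hbd : ∀ t ∈ (Set.univ : Set ℝ), ‖deriv (iteratedDeriv k θ) t‖ ≤ M := by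
      intro t _
      rw [Real.norm_eq_abs, ← iteratedDeriv_succ]
      exact hMbd (k+1) (by omega) t
    have h := Convex.norm_image_sub_le_of_norm_deriv_le hd hbd convex_univ
      (Set.mem_univ b) (Set.mem_univ a)
    simpa [Real.norm_eq_abs] using h
  refine ⟨2^(ℓ+2) * M * (1 + 2^(ℓ+1)), by positivity, ?_⟩
  intro f hdiff hzero hholder ζ hζ0 hζ1 R hR x z hx hz
  set C : ℝ := 2^(ℓ+2) * M * (1 + 2^(ℓ+1)) with hCdef
  have hC0 : 0 < C := by positivity
  have hζinv : (1:ℝ) ≤ ζ⁻¹ := by rw [← one_div, le_div_iff₀ hζ0]; linarith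
  have hR1 : (1:ℝ) ≤ R := le_trans hζinv hR
  have hR0 : (0:ℝ) < R := lt_of_lt_of_le one_pos hR1
  have hζR : (1:ℝ) ≤ ζ * R := by
    calc (1:ℝ) = ζ * ζ⁻¹ := (mul_inv_cancel₀ hζ0.ne').symm
      _ ≤ ζ * R := mul_le_mul_of_nonneg_left hR hζ0.le
  set E : ℝ := R ^ ((ℓ : ℝ) + β) * ζ ^ ℓ with hEdef
  have hE0 : 0 ≤ E := by positivity
  -- f is C^ℓ
  have hf_cont : Continuous (iteratedDeriv ℓ f) := by
    rw [Metric.continuous_iff]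
    intro b ε hε
    refine ⟨ε ^ (1/β), Real.rpow_pos_of_pos hε _, fun a ha => ?_⟩
    rw [Real.dist_eq] at ha ⊢
    calc |iteratedDeriv ℓ f a - iteratedDeriv ℓ f b| ≤ |a - b| ^ β := hholder a b
      _ < (ε ^ (1/β)) ^ β := Real.rpow_lt_rpow (abs_nonneg _) ha hβ0
      _ = ε := by rw [← Real.rpow_mul hε.le, one_div_mul_cancel hβ0.ne', Real.rpow_one]
  have hfC : ContDiff ℝ (ℓ : ℕ) f := by
    rw [contDiff_nat_iff_iteratedDeriv]
    refine ⟨fun m hm => ?_, hdiff⟩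
    rcases eq_or_lt_of_le hm with rfl | hm'
    · exact hf_cont
    · exact (hdiff m hm').continuous
  have hvC : ContDiff ℝ (ℓ : ℕ) (fun y => θ (ζ * y)) := by
    exact (hθ_smooth.of_le (by exact_mod_cast le_top)).comp (contDiff_const.mul contDiff_id)
  -- Leibniz formula
  have hG : ∀ w : ℝ, iteratedDeriv ℓ (fun y => f y * θ (ζ * y)) w
      = ∑ k ∈ Finset.range (ℓ+1), (ℓ.choose k : ℝ) *
          (iteratedDeriv k f w * (ζ ^ (ℓ - k) * iteratedDeriv (ℓ - k) θ (ζ * w))) := by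
    intro w
    rw [leibniz_iteratedDeriv ℓ f (fun y => θ (ζ * y)) hfC hvC]
    refine Finset.sum_congr rfl fun k _ => ?_
    rw [iteratedDeriv_comp_const_mul (hθ_smooth.of_le (by generalize ℓ - k = n; exact_mod_cast le_top)) ζ]
  -- Taylor bound for f
  have hT : ∀ k ≤ ℓ, ∀ y : ℝ, |iteratedDeriv k f y| ≤ |y| ^ (((ℓ - k : ℕ) : ℝ) + β) := by
    intro k hk y
    have h := aux_taylor ℓ β hβ0 f hdiff hzero hholder (ℓ - k) (by omega) y
    rwa [Nat.sub_sub_self hk] at h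
  -- sup bound
  have hsup : ∀ w : ℝ, |w| ≤ R →
      |iteratedDeriv ℓ (fun y => f y * θ (ζ * y)) w| ≤ 2^ℓ * (M * E) := by
    intro w hw
    rw [hG w]
    refine le_trans (Finset.abs_sum_le_sum_abs _ _) ?_
    have hterm : ∀ k ∈ Finset.range (ℓ+1),
        |(ℓ.choose k : ℝ) * (iteratedDeriv k f w * (ζ ^ (ℓ - k) * iteratedDeriv (ℓ - k) θ (ζ * w)))|
          ≤ (ℓ.choose k : ℝ) * (M * E) := by
      intro k hk
      rw [Finset.mem_range] at hk
      have hkℓ : k ≤ ℓ := by omega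
      rw [abs_mul, abs_mul, abs_mul, Nat.abs_cast, abs_pow, abs_of_pos hζ0]
      have h1 : |iteratedDeriv k f w| ≤ R ^ (((ℓ - k : ℕ):ℝ) + β) :=
        le_trans (hT k hkℓ w) (Real.rpow_le_rpow (abs_nonneg w) hw (by positivity))
      have h2 : |iteratedDeriv (ℓ - k) θ (ζ * w)| ≤ M := hMbd (ℓ-k) (by omega) _
      have h3 : ζ ^ (ℓ - k) * R ^ (((ℓ-k:ℕ):ℝ) + β) ≤ ζ ^ ℓ * R ^ ((ℓ:ℝ)+β) :=
        pow_bound hζ0 hβ0.le hR1 hζR (Nat.sub_le ℓ k)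
      calc (ℓ.choose k:ℝ) * (|iteratedDeriv k f w| * (ζ^(ℓ-k) * |iteratedDeriv (ℓ-k) θ (ζ*w)|))
          ≤ (ℓ.choose k:ℝ) * (R ^ (((ℓ-k:ℕ):ℝ)+β) * (ζ^(ℓ-k) * M)) := by
            refine mul_le_mul_of_nonneg_left ?_ (Nat.cast_nonneg _)
            refine mul_le_mul h1 (mul_le_mul_of_nonneg_left h2 (by positivity)) (by positivity) ?_
            positivity
        _ = (ℓ.choose k:ℝ) * M * (ζ^(ℓ-k) * R ^ (((ℓ-k:ℕ):ℝ)+β)) := by ring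
        _ ≤ (ℓ.choose k:ℝ) * M * (ζ^ℓ * R^((ℓ:ℝ)+β)) := by
            refine mul_le_mul_of_nonneg_left h3 (by positivity)
        _ = (ℓ.choose k:ℝ) * (M * E) := by rw [hEdef]; ring
    refine le_trans (Finset.sum_le_sum hterm) ?_
    rw [← Finset.sum_mul]
    have hch : ∑ k ∈ Finset.range (ℓ+1), (ℓ.choose k : ℝ) = 2^ℓ := by
      rw [← Nat.cast_sum, Nat.sum_range_choose]
      push_cast; ring
    rw [hch]
  set d : ℝ := |x - z| with hddef
  have hd0 : 0 ≤ d := abs_nonneg _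
  rcases le_or_gt 1 d with hd1 | hd1
  -- case |x - z| ≥ 1
  · have hminb : (1:ℝ) ≤ d ^ β := by
      calc (1:ℝ) = 1 ^ β := (Real.one_rpow β).symm
        _ ≤ d ^ β := Real.rpow_le_rpow zero_le_one hd1 hβ0.le
    have hmin : min (d ^ β) 1 = 1 := min_eq_right hminb
    have hmax : max d 1 = d := max_eq_left hd1
    rw [hmin, hmax]
    have htri : |iteratedDeriv ℓ (fun y => f y * θ (ζ * y)) z -
        iteratedDeriv ℓ (fun y => f y * θ (ζ * y)) x| ≤ 2^ℓ * (M * E) + 2^ℓ * (M * E) :=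
      le_trans (abs_sub _ _) (add_le_add (hsup z hz) (hsup x hx))
    refine le_trans htri ?_
    have h2p : (2:ℝ)^(ℓ+1) ≤ 2^(ℓ+2) := pow_le_pow_right₀ one_le_two (by omega)
    have hone : (1:ℝ) ≤ 1 + 2^(ℓ+1) := le_add_of_nonneg_right (by positivity)
    have hCM : (2:ℝ)^(ℓ+1) * M ≤ C := by
      rw [hCdef]
      calc (2:ℝ)^(ℓ+1) * M ≤ 2^(ℓ+2) * M := mul_le_mul_of_nonneg_right h2p hM0.le
        _ ≤ 2^(ℓ+2) * M * (1 + 2^(ℓ+1)) := le_mul_of_one_le_right (by positivity) hone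
    calc 2^ℓ * (M * E) + 2^ℓ * (M * E) = 2^(ℓ+1) * M * E := by ring
      _ ≤ 2^(ℓ+1) * M * (1 + E) :=
          mul_le_mul_of_nonneg_left (by linarith) (by positivity)
      _ ≤ C * (1 + E) := mul_le_mul_of_nonneg_right hCM (by positivity)
      _ = C * (1 + E) * 1 := by ring
      _ ≤ C * (1 + E) * d := mul_le_mul_of_nonneg_left hd1 (by positivity)
      _ = C * 1 * d * (1 + E) := by ring
  -- case |x - z| ≤ 1
  · have hd1 : d ≤ 1 := hd1.le
    have hmin : min (d ^ β) 1 = d ^ β :=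
      min_eq_left (Real.rpow_le_one hd0 hd1 hβ0.le)
    have hmax : max d 1 = 1 := max_eq_right hd1
    rw [hmin, hmax]
    have hdβ0 : 0 ≤ d ^ β := Real.rpow_nonneg hd0 β
    have hdle : d ≤ d ^ β := by
      rcases eq_or_lt_of_le hd0 with h0 | h0
      · rw [← h0, Real.zero_rpow hβ0.ne']
      · calc d = d ^ (1:ℝ) := (Real.rpow_one d).symm
          _ ≤ d ^ β := Real.rpow_le_rpow_of_exponent_ge h0 hd1 hβ1
    -- per-term estimate
    rw [hG z, hG x, ← Finset.sum_sub_distrib]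
    refine le_trans (Finset.abs_sum_le_sum_abs _ _) ?_
    have hterm : ∀ k ∈ Finset.range (ℓ+1),
        |(ℓ.choose k : ℝ) * (iteratedDeriv k f z * (ζ ^ (ℓ - k) * iteratedDeriv (ℓ - k) θ (ζ * z)))
          - (ℓ.choose k : ℝ) * (iteratedDeriv k f x * (ζ ^ (ℓ - k) * iteratedDeriv (ℓ - k) θ (ζ * x)))|
        ≤ (ℓ.choose k : ℝ) * (M * (1 + 2^(ℓ+1)) * (1 + E) * d ^ β) := by
      intro k hk
      rw [Finset.mem_range] at hk
      have hkℓ : k ≤ ℓ := by omega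
      set m : ℕ := ℓ - k with hmdef
      set A : ℝ → ℝ := iteratedDeriv m θ with hAdef
      have hsplit : (ℓ.choose k : ℝ) * (iteratedDeriv k f z * (ζ ^ m * A (ζ * z)))
          - (ℓ.choose k : ℝ) * (iteratedDeriv k f x * (ζ ^ m * A (ζ * x)))
          = (ℓ.choose k : ℝ) * ζ ^ m *
            (A (ζ * z) * (iteratedDeriv k f z - iteratedDeriv k f x)
              + (A (ζ * z) - A (ζ * x)) * iteratedDeriv k f x) := by ring
      rw [hsplit, abs_mul, abs_mul, Nat.abs_cast, abs_pow, abs_of_pos hζ0]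
      -- piece 1
      have hP1 : ζ ^ m * |A (ζ * z) * (iteratedDeriv k f z - iteratedDeriv k f x)|
          ≤ M * (1 + E) * d ^ β := by
        rw [abs_mul]
        have hA : |A (ζ * z)| ≤ M := hMbd m (by omega) _
        rcases eq_or_lt_of_le hkℓ with rfl | hkℓ'
        · have hm0 : m = 0 := by omega
          rw [hm0, pow_zero, one_mul]
          have hF : |iteratedDeriv k f z - iteratedDeriv k f x| ≤ d ^ β := by
            rw [hddef, abs_sub_comm x z]
            exact hholder z x
          calc |A (ζ * z)| * |iteratedDeriv k f z - iteratedDeriv k f x| ≤ M * d ^ β :=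
              mul_le_mul hA hF (abs_nonneg _) hM0.le
            _ ≤ M * (1 + E) * d ^ β := by
                have hdb : (0:ℝ) ≤ d ^ β := Real.rpow_nonneg hd0 β
                nlinarith [mul_nonneg hM0.le hdb]
        · have hF : |iteratedDeriv k f z - iteratedDeriv k f x|
              ≤ R ^ (((ℓ - k - 1 : ℕ):ℝ) + β) * d := by
            have h := aux_lip ℓ β hβ0 f hdiff hzero hholder k hkℓ' R hR0.le x z hx hz
            rwa [abs_sub_comm z x, ← hddef] at h
          have hpow : ζ ^ m * R ^ (((ℓ - k - 1 : ℕ):ℝ) + β) ≤ E := by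
            have e1 : R ^ (((ℓ - k - 1 : ℕ):ℝ) + β) ≤ R ^ (((m:ℕ):ℝ) + β) := by
              apply Real.rpow_le_rpow_of_exponent_le hR1
              have hnat : (ℓ - k - 1 : ℕ) ≤ m := by rw [hmdef]; omega
              have : ((ℓ - k - 1 : ℕ):ℝ) ≤ (m:ℝ) := Nat.cast_le.mpr hnat
              linarith
            calc ζ ^ m * R ^ (((ℓ - k - 1 : ℕ):ℝ) + β)
                ≤ ζ ^ m * R ^ (((m:ℕ):ℝ) + β) := mul_le_mul_of_nonneg_left e1 (by positivity)
              _ ≤ ζ ^ ℓ * R ^ ((ℓ:ℝ) + β) := pow_bound hζ0 hβ0.le hR1 hζR (by omega)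
              _ = E := by rw [hEdef]; ring
          calc ζ ^ m * (|A (ζ * z)| * |iteratedDeriv k f z - iteratedDeriv k f x|)
              ≤ ζ ^ m * (M * (R ^ (((ℓ - k - 1 : ℕ):ℝ) + β) * d)) := by
                refine mul_le_mul_of_nonneg_left ?_ (by positivity)
                exact mul_le_mul hA hF (abs_nonneg _) hM0.le
            _ = M * (ζ ^ m * R ^ (((ℓ - k - 1 : ℕ):ℝ) + β)) * d := by ring
            _ ≤ M * E * d := by
                refine mul_le_mul_of_nonneg_right (mul_le_mul_of_nonneg_left hpow hM0.le) hd0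
            _ ≤ M * E * d ^ β := mul_le_mul_of_nonneg_left hdle (by positivity)
            _ ≤ M * (1 + E) * d ^ β := by
                have hdb : (0:ℝ) ≤ d ^ β := Real.rpow_nonneg hd0 β
                nlinarith [mul_nonneg hM0.le hdb]
      -- piece 2
      have hP2 : ζ ^ m * |(A (ζ * z) - A (ζ * x)) * iteratedDeriv k f x|
          ≤ M * 2^(ℓ+1) * d ^ β := by
        by_cases hcase : 1 < |ζ * x| ∧ 1 < |ζ * z|
        · rw [hAdef, hΘzero m _ hcase.1, hΘzero m _ hcase.2, sub_self, zero_mul,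
            abs_zero, mul_zero]
          positivity
        · have hx2 : ζ * |x| ≤ 2 := by
            rcases not_and_or.mp hcase with hc | hc
            · have h1 : |ζ * x| ≤ 1 := not_lt.mp hc
              rw [abs_mul, abs_of_pos hζ0] at h1
              linarith
            · have h1 : |ζ * z| ≤ 1 := not_lt.mp hc
              rw [abs_mul, abs_of_pos hζ0] at h1
              have h3 : |x| ≤ |z| + d := by
                rw [hddef]
                calc |x| = |z + (x - z)| := by ring_nf
                  _ ≤ |z| + |x - z| := abs_add_le _ _
              have h4 : ζ * |x| ≤ ζ * (|z| + d) := mul_le_mul_of_nonneg_left h3 hζ0.le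
              have h5 : ζ * d ≤ 1 * 1 :=
                mul_le_mul hζ1 hd1 hd0 zero_le_one
              nlinarith
          have hx2' : |x| ≤ 2 / ζ := by
            rw [le_div_iff₀ hζ0]
            nlinarith [hx2]
          have hA : |A (ζ * z) - A (ζ * x)| ≤ M * (ζ * d) := by
            have h := hΘlip m (by omega) (ζ * z) (ζ * x)
            have he : |ζ * z - ζ * x| = ζ * d := by
              rw [hddef, abs_sub_comm x z, ← mul_sub, abs_mul, abs_of_pos hζ0]
            rw [he] at h
            exact h
          have hF : |iteratedDeriv k f x| ≤ (2/ζ) ^ (((m:ℕ):ℝ) + β) :=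
            le_trans (hT k hkℓ x) (Real.rpow_le_rpow (abs_nonneg x) hx2' (by positivity))
          have hkey : ζ ^ (m+1) * (2/ζ) ^ (((m:ℕ):ℝ) + β) ≤ 2^(ℓ+1) := by
            have h2ζ : (1:ℝ) ≤ 2/ζ := by rw [le_div_iff₀ hζ0]; linarith
            have e1 : (2/ζ:ℝ) ^ (((m:ℕ):ℝ) + β) ≤ (2/ζ) ^ (((m:ℕ):ℝ) + 1) :=
              Real.rpow_le_rpow_of_exponent_le h2ζ (by linarith)
            have e2 : (2/ζ:ℝ) ^ (((m:ℕ):ℝ) + 1) = (2/ζ) ^ (m+1 : ℕ) := by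
              rw [← Real.rpow_natCast (2/ζ) (m+1)]
              push_cast; ring_nf
            have e3 : ζ ^ (m+1) * (2/ζ) ^ (m+1 : ℕ) = 2 ^ (m+1) := by
              rw [← mul_pow, mul_div_cancel₀ _ hζ0.ne']
            calc ζ ^ (m+1) * (2/ζ) ^ (((m:ℕ):ℝ) + β)
                ≤ ζ ^ (m+1) * (2/ζ) ^ (((m:ℕ):ℝ) + 1) :=
                  mul_le_mul_of_nonneg_left e1 (by positivity)
              _ = 2 ^ (m+1) := by rw [e2, e3]
              _ ≤ 2^(ℓ+1) := pow_le_pow_right₀ one_le_two (by omega)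
          rw [abs_mul]
          calc ζ ^ m * (|A (ζ * z) - A (ζ * x)| * |iteratedDeriv k f x|)
              ≤ ζ ^ m * ((M * (ζ * d)) * (2/ζ) ^ (((m:ℕ):ℝ) + β)) := by
                refine mul_le_mul_of_nonneg_left ?_ (by positivity)
                exact mul_le_mul hA hF (abs_nonneg _) (by positivity)
            _ = M * d * (ζ ^ (m+1) * (2/ζ) ^ (((m:ℕ):ℝ) + β)) := by ring
            _ ≤ M * d * 2^(ℓ+1) := by
                refine mul_le_mul_of_nonneg_left hkey (by positivity)
            _ = M * 2^(ℓ+1) * d := by ring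
            _ ≤ M * 2^(ℓ+1) * d ^ β := mul_le_mul_of_nonneg_left hdle (by positivity)
      calc (ℓ.choose k : ℝ) * ζ ^ m *
          |A (ζ * z) * (iteratedDeriv k f z - iteratedDeriv k f x)
            + (A (ζ * z) - A (ζ * x)) * iteratedDeriv k f x|
          ≤ (ℓ.choose k : ℝ) * ζ ^ m *
            (|A (ζ * z) * (iteratedDeriv k f z - iteratedDeriv k f x)|
              + |(A (ζ * z) - A (ζ * x)) * iteratedDeriv k f x|) := by
            refine mul_le_mul_of_nonneg_left (abs_add_le _ _) (by positivity)
        _ = (ℓ.choose k : ℝ) * (ζ ^ m * |A (ζ * z) * (iteratedDeriv k f z - iteratedDeriv k f x)|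
              + ζ ^ m * |(A (ζ * z) - A (ζ * x)) * iteratedDeriv k f x|) := by ring
        _ ≤ (ℓ.choose k : ℝ) * (M * (1 + E) * d ^ β + M * 2^(ℓ+1) * d ^ β) := by
            refine mul_le_mul_of_nonneg_left (add_le_add hP1 hP2) (Nat.cast_nonneg _)
        _ ≤ (ℓ.choose k : ℝ) * (M * (1 + 2^(ℓ+1)) * (1 + E) * d ^ β) := by
            refine mul_le_mul_of_nonneg_left ?_ (Nat.cast_nonneg _)
            have h2p : (0:ℝ) < 2^(ℓ+1) := by positivity
            nlinarith [mul_nonneg (mul_nonneg (mul_nonneg hM0.le h2p.le) hdβ0) hE0]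
    refine le_trans (Finset.sum_le_sum hterm) ?_
    rw [← Finset.sum_mul]
    have hch : ∑ k ∈ Finset.range (ℓ+1), (ℓ.choose k : ℝ) = 2^ℓ := by
      rw [← Nat.cast_sum, Nat.sum_range_choose]
      push_cast; ring
    rw [hch]
    have h2p : (2:ℝ)^ℓ ≤ 2^(ℓ+2) := pow_le_pow_right₀ one_le_two (by omega)
    rw [hCdef]
    have hfac : (0:ℝ) ≤ M * (1 + 2^(ℓ+1)) * (1 + E) * d ^ β := by positivity
    calc (2:ℝ)^ℓ * (M * (1 + 2^(ℓ+1)) * (1 + E) * d ^ β)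
        ≤ 2^(ℓ+2) * (M * (1 + 2^(ℓ+1)) * (1 + E) * d ^ β) :=
          mul_le_mul_of_nonneg_right h2p hfac
      _ = 2^(ℓ+2) * M * (1 + 2^(ℓ+1)) * d ^ β * 1 * (1 + E) := by ring
end
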